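/- arXiv:0711.1906 — 3 statements merged into one kernel-verified Lean document; each statement's English description precedes it below -/
import Mathlib

section
/- Let n ≥ 2 be an integer. Regard R(T) = Z[L,L⁻¹] as a module over R = Z[L,L⁻¹]^W (W = Z/2 acting by L ↔ L⁻¹), which is free of rank 2 with basis {1, L}. The R-linear map R² → R(T) given by (a,b) ↦ a - Lⁿ·b is injective with cokernel isomorphic to R/(ρ_{n-1}), where ρ_{n-1} = L^{n-1}+L^{n-3}+...+L^{-(n-1)}. -/
set_option synthInstance.maxHeartbeats 1000000
open LaurentPolynomial

/-- `ρ_k = L^k + L^{k-2} + ⋯ + L^{-k}` in `ℤ[L, L⁻¹]`. -/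
noncomputable def su2Char (k : ℕ) : LaurentPolynomial ℤ :=
  ∑ j ∈ Finset.range (k + 1), T ((k : ℤ) - 2 * j)

/-- The invariant subring `R = ℤ[L,L⁻¹]^W`, where the Weyl group `W = ℤ/2`
acts by exchanging `L` and `L⁻¹`: the equalizer of the inversion algebra
automorphism and the identity. -/
noncomputable def weylInvariants : Subalgebra ℤ (LaurentPolynomial ℤ) :=
  AlgHom.equalizer (invert.toAlgHom : LaurentPolynomial ℤ →ₐ[ℤ] LaurentPolynomial ℤ)
    (AlgHom.id ℤ (LaurentPolynomial ℤ))

/-- The `R`-linear map `R² → R(T) = ℤ[L,L⁻¹]`, `(a, b) ↦ a - Lⁿ·b`. -/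
noncomputable def mvMapSU2 (n : ℕ) :
    (weylInvariants × weylInvariants) →ₗ[weylInvariants] LaurentPolynomial ℤ where
  toFun p := (p.1 : LaurentPolynomial ℤ) - T (n : ℤ) * (p.2 : LaurentPolynomial ℤ)
  map_add' p q := by
    simp only [Prod.fst_add, Prod.snd_add]
    push_cast
    ring
  map_smul' c p := by
    have h1 : ((c • p).1 : LaurentPolynomial ℤ) = (c : LaurentPolynomial ℤ) * p.1 := rfl
    have h2 : ((c • p).2 : LaurentPolynomial ℤ) = (c : LaurentPolynomial ℤ) * p.2 := rfl
    have h3 : c • ((p.1 : LaurentPolynomial ℤ) - T (n : ℤ) * (p.2 : LaurentPolynomial ℤ))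
        = (c : LaurentPolynomial ℤ) * ((p.1 : LaurentPolynomial ℤ) - T (n : ℤ) * (p.2 : LaurentPolynomial ℤ)) := rfl
    simp only [RingHom.id_apply, h1, h2, h3]
    ring

/-!
Put `δ = L - L⁻¹`. Since `δ ∣ Lᵐ - L⁻ᵐ`, every antisymmetric part `f - f̄` is divisible by `δ`,
and the divided difference `D f = (f - f̄) / δ` is an `R`-linear map `R(T) → R` with kernel `R`;
it is onto because `D (L r) = r`. By the Weyl character formula `δ ρ_{n-1} = Lⁿ - L⁻ⁿ` we get
`D (a - Lⁿ b) = -ρ_{n-1} b`, so the image of `(a, b) ↦ a - Lⁿ b` is `D⁻¹ (ρ_{n-1})` and the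
cokernel is `R / (ρ_{n-1})`. Injectivity follows by applying `D` too, as `ρ_{n-1} ≠ 0`.
-/

section WeylDenominator

variable {R : Type*} [CommRing R]

noncomputable def weylDenom : R[T;T⁻¹] := T 1 - T (-1)

lemma weylDenom_dvd_T_sub_T_neg (n : ℤ) : (weylDenom : R[T;T⁻¹]) ∣ T n - T (-n) := by
  have key (m : ℕ) : (weylDenom : R[T;T⁻¹]) ∣ T m - T (-m) := by
    simpa [weylDenom, T_pow] using sub_dvd_pow_sub_pow (T 1 : R[T;T⁻¹]) (T (-1)) m
  obtain ⟨m, rfl | rfl⟩ := n.eq_nat_or_neg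
  · exact key m
  · simpa using (key m).neg_right

lemma weylDenom_dvd_sub_invert (f : R[T;T⁻¹]) : weylDenom ∣ f - invert f := by
  induction f using LaurentPolynomial.induction_on' with
  | add p q hp hq => simpa [add_sub_add_comm] using dvd_add hp hq
  | C_mul_T n a => simpa [mul_sub] using (weylDenom_dvd_T_sub_T_neg n).mul_left (C a)

lemma invert_weylDenom : invert (weylDenom : R[T;T⁻¹]) = -weylDenom := by
  simp [weylDenom]

lemma T_sub_T_neg_ne_zero [Nontrivial R] {n : ℤ} (hn : n ≠ 0) :
    (T n - T (-n) : R[T;T⁻¹]) ≠ 0 := by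
  intro h
  have := congrArg (·.coeff n) (sub_eq_zero.mp h)
  simp only [T_apply, if_neg (show -n ≠ n by omega)] at this
  exact one_ne_zero this

lemma weylDenom_ne_zero [Nontrivial R] : (weylDenom : R[T;T⁻¹]) ≠ 0 :=
  T_sub_T_neg_ne_zero one_ne_zero

end WeylDenominator

lemma mem_weylInvariants_iff {f : ℤ[T;T⁻¹]} : f ∈ weylInvariants ↔ invert f = f := Iff.rfl

/-- The Weyl character formula for `SU(2)`. -/
lemma weylDenom_mul_su2Char (k : ℕ) : weylDenom * su2Char k = T (k + 1) - T (-(k + 1)) := by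
  let f (j : ℕ) : ℤ[T;T⁻¹] := T (k + 1 - 2 * j)
  calc weylDenom * su2Char k = ∑ j ∈ Finset.range (k + 1), (f j - f (j + 1)) := by
        rw [su2Char, Finset.mul_sum]
        refine Finset.sum_congr rfl fun j _ => ?_
        simp only [f, weylDenom, sub_mul, ← T_add]
        push_cast
        ring_nf
    _ = T (k + 1) - T (-(k + 1)) := by
        rw [Finset.sum_range_sub']
        simp only [f]
        congr 2
        push_cast
        ring

lemma weylDenom_mul_su2Char_pred {n : ℕ} (hn : n ≠ 0) :
    weylDenom * su2Char (n - 1) = T n - T (-n) := by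
  obtain ⟨k, rfl⟩ := Nat.exists_eq_succ_of_ne_zero hn
  simpa using weylDenom_mul_su2Char k

lemma su2Char_ne_zero (k : ℕ) : su2Char k ≠ 0 :=
  right_ne_zero_of_mul (by rw [weylDenom_mul_su2Char]; exact T_sub_T_neg_ne_zero (by omega))

lemma su2Char_mem_weylInvariants (k : ℕ) : su2Char k ∈ weylInvariants := by
  rw [mem_weylInvariants_iff]
  apply mul_left_cancel₀ (neg_ne_zero.mpr weylDenom_ne_zero)
  have h := congrArg invert (weylDenom_mul_su2Char k)
  rw [map_mul, invert_weylDenom] at h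
  simp only [map_sub, invert_T, neg_neg] at h
  linear_combination h + weylDenom_mul_su2Char k

noncomputable def invariantSu2Char (k : ℕ) : weylInvariants :=
  ⟨su2Char k, su2Char_mem_weylInvariants k⟩

lemma invariantSu2Char_zero : invariantSu2Char 0 = 1 :=
  Subtype.ext (by simp [invariantSu2Char, su2Char])

/-- The divided-difference operator `f ↦ (f - f̄) / (L - L⁻¹)`. -/
noncomputable def divDiff (f : ℤ[T;T⁻¹]) : ℤ[T;T⁻¹] :=
  (weylDenom_dvd_sub_invert f).choose

lemma weylDenom_mul_divDiff (f : ℤ[T;T⁻¹]) : weylDenom * divDiff f = f - invert f :=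
  (weylDenom_dvd_sub_invert f).choose_spec.symm

lemma divDiff_eq {f q : ℤ[T;T⁻¹]} (h : weylDenom * q = f - invert f) : divDiff f = q :=
  mul_left_cancel₀ weylDenom_ne_zero ((weylDenom_mul_divDiff f).trans h.symm)

lemma divDiff_mem_weylInvariants (f : ℤ[T;T⁻¹]) : divDiff f ∈ weylInvariants := by
  rw [mem_weylInvariants_iff]
  refine (divDiff_eq ?_).symm
  have h := congrArg invert (weylDenom_mul_divDiff f)
  rw [map_mul, invert_weylDenom, map_sub, involutive_invert f] at h
  linear_combination -h

lemma divDiff_add (f g : ℤ[T;T⁻¹]) : divDiff (f + g) = divDiff f + divDiff g :=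
  divDiff_eq (by rw [mul_add, weylDenom_mul_divDiff, weylDenom_mul_divDiff, map_add]; ring)

lemma divDiff_mul_of_mem {c : ℤ[T;T⁻¹]} (hc : c ∈ weylInvariants) (f : ℤ[T;T⁻¹]) :
    divDiff (c * f) = c * divDiff f :=
  divDiff_eq (by
    rw [map_mul, mem_weylInvariants_iff.mp hc, mul_left_comm, weylDenom_mul_divDiff, mul_sub])

lemma divDiff_eq_zero_iff {f : ℤ[T;T⁻¹]} : divDiff f = 0 ↔ f ∈ weylInvariants := by
  rw [mem_weylInvariants_iff, eq_comm (a := invert f), ← sub_eq_zero (a := f),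
    ← weylDenom_mul_divDiff, mul_eq_zero, or_iff_right weylDenom_ne_zero]

lemma divDiff_T {n : ℕ} (hn : n ≠ 0) : divDiff (T n) = su2Char (n - 1) :=
  divDiff_eq (by rw [weylDenom_mul_su2Char_pred hn, invert_T])

noncomputable def divDiffLinearMap : ℤ[T;T⁻¹] →ₗ[weylInvariants] weylInvariants where
  toFun f := ⟨divDiff f, divDiff_mem_weylInvariants f⟩
  map_add' f g := Subtype.ext (divDiff_add f g)
  map_smul' c f := Subtype.ext (divDiff_mul_of_mem c.2 f)

lemma divDiffLinearMap_eq_zero_iff {f : ℤ[T;T⁻¹]} :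
    divDiffLinearMap f = 0 ↔ f ∈ weylInvariants :=
  Subtype.ext_iff.trans divDiff_eq_zero_iff

lemma divDiffLinearMap_T {n : ℕ} (hn : n ≠ 0) :
    divDiffLinearMap (T n) = invariantSu2Char (n - 1) :=
  Subtype.ext (divDiff_T hn)

lemma divDiffLinearMap_surjective : Function.Surjective divDiffLinearMap := by
  intro r
  refine ⟨r • T 1, ?_⟩
  have h := divDiffLinearMap_T (n := 1) one_ne_zero
  simp only [Nat.cast_one] at h
  rw [map_smul, h, Nat.sub_self, invariantSu2Char_zero, smul_eq_mul, mul_one]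

lemma mvMapSU2_apply (n : ℕ) (p : weylInvariants × weylInvariants) :
    mvMapSU2 n p = (p.1 : ℤ[T;T⁻¹]) - p.2 • T n := by
  rw [Subalgebra.smul_def, smul_eq_mul, mul_comm]
  rfl

lemma divDiffLinearMap_mvMapSU2 {n : ℕ} (hn : n ≠ 0) (p : weylInvariants × weylInvariants) :
    divDiffLinearMap (mvMapSU2 n p) = -(p.2 * invariantSu2Char (n - 1)) := by
  rw [mvMapSU2_apply, map_sub, map_smul, divDiffLinearMap_T hn,
    divDiffLinearMap_eq_zero_iff.mpr p.1.2, smul_eq_mul, zero_sub]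

lemma mvMapSU2_injective {n : ℕ} (hn : n ≠ 0) : Function.Injective (mvMapSU2 n) := by
  rw [injective_iff_map_eq_zero]
  rintro ⟨a, b⟩ h
  have hb : b = 0 := by
    have h' := divDiffLinearMap_mvMapSU2 hn (a, b)
    rw [h, map_zero, eq_comm, neg_eq_zero, mul_eq_zero] at h'
    exact h'.resolve_right fun h0 => su2Char_ne_zero (n - 1) (congrArg Subtype.val h0)
  subst hb
  rw [mvMapSU2_apply, zero_smul, sub_zero, ZeroMemClass.coe_eq_zero] at h
  exact Prod.ext h rfl

lemma range_mvMapSU2 {n : ℕ} (hn : n ≠ 0) :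
    LinearMap.range (mvMapSU2 n) =
      Submodule.comap divDiffLinearMap (Ideal.span {invariantSu2Char (n - 1)}) := by
  ext f
  rw [Submodule.mem_comap, Ideal.mem_span_singleton']
  constructor
  · rintro ⟨p, rfl⟩
    exact ⟨-p.2, (neg_mul p.2 _).trans (divDiffLinearMap_mvMapSU2 hn p).symm⟩
  · rintro ⟨c, hc⟩
    have ha : f - c • T n ∈ weylInvariants := by
      rw [← divDiffLinearMap_eq_zero_iff, map_sub, map_smul, divDiffLinearMap_T hn, ← hc,
        smul_eq_mul, sub_self]
    refine ⟨(⟨_, ha⟩, -c), ?_⟩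
    rw [mvMapSU2_apply, neg_smul, sub_neg_eq_add, sub_add_cancel]

noncomputable def Submodule.quotComapEquivOfSurjective {A M N : Type*} [Ring A]
    [AddCommGroup M] [AddCommGroup N] [Module A M] [Module A N] {f : M →ₗ[A] N}
    (hf : Function.Surjective f) (p : Submodule A N) : (M ⧸ p.comap f) ≃ₗ[A] N ⧸ p :=
  (Submodule.quotEquivOfEq _ _ (by rw [LinearMap.ker_comp, Submodule.ker_mkQ])).trans
    (LinearMap.quotKerEquivOfSurjective (p.mkQ ∘ₗ f) (p.mkQ_surjective.comp hf))

noncomputable def cokerMvMapSU2Equiv {n : ℕ} (hn : n ≠ 0) :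
    (ℤ[T;T⁻¹] ⧸ LinearMap.range (mvMapSU2 n)) ≃ₗ[weylInvariants]
      weylInvariants ⧸ Ideal.span {invariantSu2Char (n - 1)} :=
  (Submodule.quotEquivOfEq _ _ (range_mvMapSU2 hn)).trans
    (Submodule.quotComapEquivOfSurjective divDiffLinearMap_surjective _)

/-- Mayer–Vietoris computation of `K^τ_{SU(2)}(SU(2))` at level `n ≥ 2`:
regarding `R(T) = ℤ[L,L⁻¹]` as a module over `R = ℤ[L,L⁻¹]^W`, the `R`-linear
map `R² → R(T)`, `(a,b) ↦ a - Lⁿ b`, is injective with cokernel isomorphic to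
`R/(ρ_{n-1})`. -/
theorem mayer_vietoris_SU2 (n : ℕ) (hn : 2 ≤ n) :
    ∃ hρ : su2Char (n - 1) ∈ weylInvariants,
      Function.Injective (mvMapSU2 n) ∧
      Nonempty
        ((LaurentPolynomial ℤ ⧸ LinearMap.range (mvMapSU2 n))
          ≃ₗ[weylInvariants]
            (weylInvariants ⧸
              Ideal.span {(⟨su2Char (n - 1), hρ⟩ : weylInvariants)})) := by
  have hn0 : n ≠ 0 := by omega
  exact ⟨su2Char_mem_weylInvariants (n - 1), mvMapSU2_injective hn0, ⟨cokerMvMapSU2Equiv hn0⟩⟩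
end

section
/- Let T be a maximal torus of a compact connected Lie group G with torsion-free fundamental group, with integral lattice Π = ker(exp: t → T) and extended affine Weyl group W_aff^ext = Π ⋊ W. Then for every x ∈ t, the stabilizer of x in W_aff^ext is finite and is contained in the affine Weyl group W_aff = N(T,R) ⋊ W. -/
variable (V : Type*) [AddCommGroup V] [Module ℝ V]
variable (W : Type*) [Group W] [DistribMulAction W V]

/-- The action of `W` on the translation group `V`, as a homomorphism
`W →* MulAut (Multiplicative V)`, used to form the group `V ⋊ W` of affine
transformations `x ↦ w • x + v`. -/
def weylConj : W →* MulAut (Multiplicative V) where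
  toFun w := AddEquiv.toMultiplicative (DistribMulAction.toAddAut W V w)
  map_one' := by ext x; simp
  map_mul' w₁ w₂ := by ext x; simp [mul_smul]

/-- The affine action of `V ⋊ W` on `V`: `(v, w) • x = w • x + v`. -/
instance affineAction : MulAction (Multiplicative V ⋊[weylConj V W] W) V where
  smul g x := g.right • x + Multiplicative.toAdd g.left
  one_smul x := by
    show (1 : W) • x + Multiplicative.toAdd (1 : Multiplicative V) = x
    simp
  mul_smul g h x := by
    show (g.right * h.right) • x + Multiplicative.toAdd (g * h).left
      = g.right • (h.right • x + Multiplicative.toAdd h.left) + Multiplicative.toAdd g.left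
    simp [SemidirectProduct.mul_left, mul_smul, smul_add, weylConj, add_assoc]
    exact add_comm _ _

/-- Prop 2.13 (thm:12) of "Loop groups and twisted K-theory I", abstracted:
let `t = V` be the Lie algebra of a maximal torus, `Π ⊆ V` the integral
lattice, `W` the (finite) Weyl group, and `W_ext = Π ⋊ W` the extended affine
Weyl group acting on `V` by `(π, w) • x = w • x + π`.  Let `W_aff ⊆ W_ext` be
the affine Weyl group: it is normal (in `W_ext`) and the quotient
`W_ext/W_aff ≅ π₁(G)` is torsion free (encoded by `htf`).  Then for every
`x ∈ V` the stabilizer of `x` in `W_ext` is finite and contained in `W_aff`. -/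
theorem stabilizer_finite_and_le_affineWeyl
    [Finite W]
    (P : AddSubgroup V) (hP : ∀ (w : W) (v : V), v ∈ P → w • v ∈ P)
    (Wext : Set (Multiplicative V ⋊[weylConj V W] W))
    (hWext : Wext = {g | Multiplicative.toAdd g.left ∈ P})
    (Waff : Subgroup (Multiplicative V ⋊[weylConj V W] W))
    (hle : (Waff : Set _) ⊆ Wext)
    (hnorm : ∀ g ∈ Wext, ∀ h ∈ Waff, g * h * g⁻¹ ∈ Waff)
    (htf : ∀ g ∈ Wext, ∀ n : ℕ, 0 < n → g ^ n ∈ Waff → g ∈ Waff)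
    (x : V) :
    Set.Finite {g | g ∈ Wext ∧ g • x = x} ∧
    ∀ g ∈ Wext, g • x = x → g ∈ Waff := by
  have smul_def : ∀ (g : Multiplicative V ⋊[weylConj V W] W) (y : V),
      g • y = g.right • y + Multiplicative.toAdd g.left := fun _ _ => rfl
  constructor
  · have : Set.InjOn SemidirectProduct.right {g | g ∈ Wext ∧ g • x = x} := by
      intro g hg h hh hr
      have hg' : Multiplicative.toAdd g.left = x - g.right • x := by
        have := hg.2; rw [smul_def] at this; rw [eq_sub_iff_add_eq, add_comm]; exact this
      have hh' : Multiplicative.toAdd h.left = x - h.right • x := by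
        have := hh.2; rw [smul_def] at this; rw [eq_sub_iff_add_eq, add_comm]; exact this
      ext
      · exact Multiplicative.toAdd.injective (by rw [hg', hh', hr])
      · exact hr
    exact Set.Finite.of_finite_image (Set.toFinite _) this
  · intro g hg hgx
    apply htf g hg (orderOf g.right) (orderOf_pos g.right)
    have hfix : g ^ orderOf g.right • x = x := by
      induction orderOf g.right with
      | zero => simp
      | succ n ih => rw [pow_succ, mul_smul, hgx]; exact ih
    have hright : (g ^ orderOf g.right).right = 1 := by
      rw [← SemidirectProduct.rightHom_eq_right, map_pow, SemidirectProduct.rightHom_eq_right, pow_orderOf_eq_one]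
    rw [smul_def, hright, one_smul] at hfix
    have hleft : (g ^ orderOf g.right).left = 1 :=
      Multiplicative.toAdd.injective (by simpa using add_eq_left.mp hfix)
    have : g ^ orderOf g.right = 1 := by ext <;> simp [hleft, hright]
    rw [this]; exact one_mem _
end

section
/- Let Λ be a finitely generated free abelian group, Π ⊆ Λ a finite-index subgroup, ε: Π → Z/2 a homomorphism, and W a finite group acting on Λ preserving Π and ε, such that reflections in W act by -1 on the sign module Z(ε-twisted). Then the group Hom_{Π⋊W}(Λ, Z(ε)) of (Π⋊W)-equivariant functions Λ → Z (where Π acts on Λ by translation and on Z by ε, and W acts by its natural action on Λ and trivially twisted by sign on Z) is a free abelian group of rank equal to the number of free W-orbits on the finite set Λ_ε of Π-cosets in Λ satisfying the ε-compatibility, i.e. the number of free (Π⋊W)-orbits in Λ. -/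
variable (Λ : Type*) [AddCommGroup Λ]
variable (W : Type*) [Group W] [DistribMulAction W Λ]

/-- The orbit equivalence relation on `Λ` of the extended affine Weyl group
`Π ⋊ W`, where `Π ⊆ Λ` acts by translations and `W` by its natural action. -/
def extAffSetoid (P : AddSubgroup Λ)
    (hP : ∀ (w : W) (v : Λ), v ∈ P → w • v ∈ P) : Setoid Λ where
  r x y := ∃ (w : W) (π : Λ), π ∈ P ∧ w • x + π = y
  iseqv := by
    constructor
    · exact fun x => ⟨1, 0, P.zero_mem, by simp⟩
    · rintro x y ⟨w, π, hπ, rfl⟩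
      exact ⟨w⁻¹, -(w⁻¹ • π), P.neg_mem (hP w⁻¹ π hπ), by
        rw [smul_add, inv_smul_smul]; abel⟩
    · rintro x y z ⟨w, π, hπ, rfl⟩ ⟨w', π', hπ', rfl⟩
      exact ⟨w' * w, w' • π + π', P.add_mem (hP w' π hπ) hπ', by
        rw [mul_smul, smul_add]; abel⟩

/-- The `(Π ⋊ W)`-equivariant functions `f : Λ → ℤ(ε)`: `f(λ + π) = ε(π)f(λ)`
for `π ∈ Π` and `f(w·λ) = sgn(w)·f(λ)` for `w ∈ W`, as a `ℤ`-submodule of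
`Λ → ℤ`. -/
def equivariantFunctions (P : AddSubgroup Λ) (ε : P → ℤˣ) (sgn : W →* ℤˣ) :
    Submodule ℤ (Λ → ℤ) where
  carrier := {f | (∀ (π : P) (x : Λ), f (x + π) = (ε π : ℤ) * f x) ∧
    (∀ (w : W) (x : Λ), f (w • x) = (sgn w : ℤ) * f x)}
  zero_mem' := ⟨fun _ _ => by simp, fun _ _ => by simp⟩
  add_mem' := by
    rintro f g ⟨hf1, hf2⟩ ⟨hg1, hg2⟩
    exact ⟨fun π x => by simp [hf1 π x, hg1 π x]; ring,
      fun w x => by simp [hf2 w x, hg2 w x]; ring⟩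
  smul_mem' := by
    rintro c f ⟨hf1, hf2⟩
    exact ⟨fun π x => by simp [hf1 π x]; ring,
      fun w x => by simp [hf2 w x]; ring⟩

/-- The set of "free" (regular) orbits: classes all of whose elements `x` have
trivial `ε`-twisted stabilizer, i.e. whenever `(π, w)` fixes `x` (that is,
`x - w • x = π ∈ Π`), the twist `sgn(w)·ε(π)` is `+1`. -/
def freeOrbits (P : AddSubgroup Λ) (hP : ∀ (w : W) (v : Λ), v ∈ P → w • v ∈ P)
    (ε : P → ℤˣ) (sgn : W →* ℤˣ) : Set (Quotient (extAffSetoid Λ W P hP)) :=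
  {q | ∀ x : Λ, Quotient.mk (extAffSetoid Λ W P hP) x = q →
    ∀ (w : W) (hm : x - w • x ∈ P), sgn w * ε ⟨x - w • x, hm⟩ = 1}

/-
Let `G = Π ⋊ W` act on `Λ` by `(π, w) • x = w • x + π`. Since `ε` is `W`-invariant,
`χ(π, w) = ε(π) sgn(w)` is a character of `G`, and the equivariant functions are exactly the
`χ`-twisted invariants `f (g • x) = χ g * f x`. Such an `f` is determined by its values on
orbit representatives, and vanishes on every orbit whose stabilizers are not contained in
`ker χ`, because there `f x = -f x`. On an orbit whose stabilizers lie in `ker χ`, the value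
`χ g * c` at `g • x₀` does not depend on the choice of `g`, so any value `c` at the
representative `x₀` extends. There are finitely many orbits, as they are images of the cosets
of `Π`.
-/

namespace MulAction

variable {G : Type*} (X : Type*) [Group G] [MulAction G X] (χ : G →* ℤˣ)

def twistedInvariants : Submodule ℤ (X → ℤ) where
  carrier := {f | ∀ (g : G) (x : X), f (g • x) = χ g * f x}
  zero_mem' := by simp
  add_mem' hf hf' g x := by simp [hf g x, hf' g x, mul_add]
  smul_mem' c f hf g x := by simp [hf g x, mul_left_comm]

def regularOrbits : Set (orbitRel.Quotient G X) :=
  {q | ∀ x : X, Quotient.mk'' x = q → stabilizer G x ≤ χ.ker}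

variable {X χ}

theorem exists_smul_out_eq (x : X) :
    ∃ g : G, g • (Quotient.mk'' x : orbitRel.Quotient G X).out = x :=
  orbitRel_apply.mp (Quotient.exact' (Quotient.out_eq' (Quotient.mk'' x)).symm)

theorem stabilizer_out_le_ker {q : orbitRel.Quotient G X} (hq : q ∈ regularOrbits X χ) :
    stabilizer G q.out ≤ χ.ker :=
  hq _ (Quotient.out_eq' q)

theorem map_eq_of_smul_eq {x : X} (hx : stabilizer G x ≤ χ.ker) {g g' : G}
    (h : g • x = g' • x) : χ g = χ g' := by
  have hstab : g⁻¹ * g' ∈ stabilizer G x := by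
    rw [mem_stabilizer_iff, mul_smul, ← h, inv_smul_smul]
  rw [← inv_mul_eq_one, ← map_inv, ← map_mul]
  exact hx hstab

theorem apply_eq_zero_of_mem_stabilizer {f : X → ℤ} (hf : f ∈ twistedInvariants X χ) {x : X}
    {g : G} (hg : g ∈ stabilizer G x) (hχ : χ g ≠ 1) : f x = 0 := by
  have hfx := hf g x
  rw [mem_stabilizer_iff.mp hg, Int.units_ne_iff_eq_neg.mp hχ] at hfx
  push_cast at hfx
  linarith

theorem apply_eq_zero_of_notMem_regularOrbits {f : X → ℤ} (hf : f ∈ twistedInvariants X χ)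
    {x : X} (hx : Quotient.mk'' x ∉ regularOrbits X χ) : f x = 0 := by
  simp only [regularOrbits, Set.mem_ofPred_eq, not_forall, SetLike.not_le_iff_exists,
    MonoidHom.mem_ker] at hx
  obtain ⟨y, hyx, g, hg, hχ⟩ := hx
  obtain ⟨a, rfl⟩ : x ∈ orbit G y := orbitRel_apply.mp (Quotient.eq''.mp hyx.symm)
  rw [hf a y, apply_eq_zero_of_mem_stabilizer hf hg hχ, mul_zero]

variable (χ) in
noncomputable def extendFromRegularOrbits (φ : regularOrbits X χ → ℤ) (x : X) : ℤ :=
  χ (exists_smul_out_eq (G := G) x).choose * Function.extend Subtype.val φ 0 (Quotient.mk'' x)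

theorem extendFromRegularOrbits_of_mem (φ : regularOrbits X χ → ℤ) {x : X}
    (hx : Quotient.mk'' x ∈ regularOrbits X χ) {g : G}
    (hg : g • (Quotient.mk'' x : orbitRel.Quotient G X).out = x) :
    extendFromRegularOrbits χ φ x = χ g * φ ⟨_, hx⟩ := by
  rw [extendFromRegularOrbits, map_eq_of_smul_eq (stabilizer_out_le_ker hx)
    ((exists_smul_out_eq x).choose_spec.trans hg.symm)]
  exact congrArg _ (Subtype.val_injective.extend_apply φ 0 ⟨_, hx⟩)

theorem extendFromRegularOrbits_of_notMem (φ : regularOrbits X χ → ℤ) {x : X}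
    (hx : Quotient.mk'' x ∉ regularOrbits X χ) : extendFromRegularOrbits χ φ x = 0 := by
  rw [extendFromRegularOrbits, Function.extend_apply' _ _ _ fun ⟨q, hq⟩ => hx (hq ▸ q.2),
    Pi.zero_apply, mul_zero]

theorem extendFromRegularOrbits_mem (φ : regularOrbits X χ → ℤ) :
    extendFromRegularOrbits χ φ ∈ twistedInvariants X χ := by
  intro g x
  have hgx : (Quotient.mk'' (g • x) : orbitRel.Quotient G X) = Quotient.mk'' x :=
    Quotient.sound' (mem_orbit x g)
  by_cases hx : Quotient.mk'' x ∈ regularOrbits X χ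
  · obtain ⟨a, ha⟩ := exists_smul_out_eq (G := G) x
    rw [extendFromRegularOrbits_of_mem φ hx ha,
      extendFromRegularOrbits_of_mem φ (hgx ▸ hx) (g := g * a) (by rw [hgx, mul_smul, ha])]
    simp only [hgx, map_mul, Units.val_mul, mul_assoc]
  · rw [extendFromRegularOrbits_of_notMem φ hx,
      extendFromRegularOrbits_of_notMem φ (hgx ▸ hx), mul_zero]

variable (X χ) in
noncomputable def twistedInvariantsEquiv :
    twistedInvariants X χ ≃ₗ[ℤ] (regularOrbits X χ → ℤ) where
  toFun f q := f.1 q.1.out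
  map_add' _ _ := rfl
  map_smul' _ _ := rfl
  invFun φ := ⟨extendFromRegularOrbits χ φ, extendFromRegularOrbits_mem φ⟩
  left_inv f := by
    ext x
    change extendFromRegularOrbits χ _ x = f.1 x
    by_cases hx : Quotient.mk'' x ∈ regularOrbits X χ
    · obtain ⟨a, ha⟩ := exists_smul_out_eq (G := G) x
      rw [extendFromRegularOrbits_of_mem _ hx ha, ← f.2 a, ha]
    · rw [extendFromRegularOrbits_of_notMem _ hx, apply_eq_zero_of_notMem_regularOrbits f.2 hx]
  right_inv φ := by
    ext ⟨q, hq⟩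
    have hout : (Quotient.mk'' q.out : orbitRel.Quotient G X) = q := Quotient.out_eq' q
    change extendFromRegularOrbits χ φ q.out = φ ⟨q, hq⟩
    rw [extendFromRegularOrbits_of_mem φ (by rwa [hout]) (g := 1) (by rw [hout, one_smul])]
    simp only [hout, map_one, Units.val_one, one_mul]

end MulAction

section ExtendedAffineWeylGroup

open MulAction

variable {Λ W} {P : AddSubgroup Λ} (hP : ∀ (w : W) (v : Λ), v ∈ P → w • v ∈ P)

instance [P.FiniteIndex] : Finite (Quotient (extAffSetoid Λ W P hP)) := by
  refine Finite.of_surjective (α := Λ ⧸ P) (Quotient.map' id ?_) ?_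
  · intro a b hab
    refine ⟨1, -a + b, QuotientAddGroup.leftRel_apply.mp hab, ?_⟩
    rw [one_smul]
    exact add_neg_cancel_left a b
  · rintro ⟨x⟩
    exact ⟨QuotientAddGroup.mk x, rfl⟩

def weylAut : W →* MulAut (Multiplicative P) where
  toFun w :=
    { toFun := fun π => .ofAdd ⟨w • (π.toAdd : Λ), hP w _ π.toAdd.2⟩
      invFun := fun π => .ofAdd ⟨w⁻¹ • (π.toAdd : Λ), hP w⁻¹ _ π.toAdd.2⟩
      left_inv := fun π => by simp
      right_inv := fun π => by simp
      map_mul' := fun π π' => by ext; simp [smul_add] }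
  map_one' := by ext; simp
  map_mul' w w' := by ext; simp [mul_smul]

abbrev ExtAffineWeylGroup : Type _ := Multiplicative P ⋊[weylAut hP] W

instance : MulAction (ExtAffineWeylGroup hP) Λ where
  smul g x := g.right • x + (g.left.toAdd : Λ)
  one_smul x := show (1 : W) • x + 0 = x by rw [one_smul, add_zero]
  mul_smul g g' x := by
    change (g.right * g'.right) • x + ((g.left * weylAut hP g.right g'.left).toAdd : Λ) =
      g.right • (g'.right • x + (g'.left.toAdd : Λ)) + (g.left.toAdd : Λ)
    simp only [weylAut, mul_smul, MonoidHom.coe_mk, OneHom.coe_mk, MulEquiv.coe_mk,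
      Equiv.coe_fn_mk, toAdd_mul, toAdd_ofAdd, AddSubgroup.coe_add, smul_add]
    abel

variable {hP}

theorem ExtAffineWeylGroup.smul_def (g : ExtAffineWeylGroup hP) (x : Λ) :
    g • x = g.right • x + (g.left.toAdd : Λ) := rfl

variable (hP)

theorem extAffSetoid_iff_orbitRel (x y : Λ) :
    extAffSetoid Λ W P hP x y ↔ orbitRel (ExtAffineWeylGroup hP) Λ x y := by
  constructor
  · rintro ⟨w, π, hπ, rfl⟩
    exact (orbitRel _ Λ).symm ⟨⟨.ofAdd ⟨π, hπ⟩, w⟩, rfl⟩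
  · intro h
    obtain ⟨g, hg⟩ := (orbitRel _ Λ).symm h
    exact ⟨g.right, g.left.toAdd, g.left.toAdd.2, hg⟩

variable (ε : P → ℤˣ) (hε : ∀ a b : P, ε (a + b) = ε a * ε b)
  (hεW : ∀ (w : W) (π : P), ε ⟨w • (π : Λ), hP w π π.2⟩ = ε π) (sgn : W →* ℤˣ)

def extAffineCharacter : ExtAffineWeylGroup hP →* ℤˣ :=
  SemidirectProduct.lift (MonoidHom.mk' (fun π => ε π.toAdd) fun a b => hε a.toAdd b.toAdd) sgn
    fun w => MonoidHom.ext fun π => by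
      simp only [MonoidHom.comp_apply, MulEquiv.coe_toMonoidHom, MulAut.conj_apply,
        mul_inv_cancel_comm]
      exact hεW w π.toAdd

theorem extAffineCharacter_apply (g : ExtAffineWeylGroup hP) :
    extAffineCharacter hP ε hε hεW sgn g = ε g.left.toAdd * sgn g.right := rfl

theorem equivariantFunctions_eq_twistedInvariants :
    equivariantFunctions Λ W P ε sgn =
      twistedInvariants Λ (extAffineCharacter hP ε hε hεW sgn) := by
  ext f
  constructor
  · rintro ⟨htrans, hweyl⟩ g x
    rw [ExtAffineWeylGroup.smul_def, htrans, hweyl, extAffineCharacter_apply, Units.val_mul,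
      mul_assoc]
  · intro hf
    refine ⟨fun π x => ?_, fun w x => ?_⟩
    · simpa [ExtAffineWeylGroup.smul_def, extAffineCharacter] using hf (.inl (.ofAdd π)) x
    · simpa [ExtAffineWeylGroup.smul_def, extAffineCharacter] using hf (.inr w) x

def extAffOrbitEquiv :
    Quotient (extAffSetoid Λ W P hP) ≃ orbitRel.Quotient (ExtAffineWeylGroup hP) Λ :=
  Quotient.congrRight (extAffSetoid_iff_orbitRel hP)

theorem stabilizer_le_ker_extAffineCharacter_iff (x : Λ) :
    stabilizer (ExtAffineWeylGroup hP) x ≤ (extAffineCharacter hP ε hε hεW sgn).ker ↔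
      ∀ (w : W) (hm : x - w • x ∈ P), sgn w * ε ⟨x - w • x, hm⟩ = 1 := by
  constructor
  · intro h w hm
    have hfix :
        (⟨.ofAdd ⟨x - w • x, hm⟩, w⟩ : ExtAffineWeylGroup hP) ∈ stabilizer _ x :=
      add_sub_cancel (w • x) x
    rw [mul_comm]
    exact h hfix
  · rintro h ⟨π, w⟩ (hfix : w • x + (π.toAdd : Λ) = x)
    have hm : x - w • x ∈ P := eq_sub_of_add_eq' hfix ▸ π.toAdd.2
    have hπ : π.toAdd = ⟨x - w • x, hm⟩ := Subtype.ext (eq_sub_of_add_eq' hfix)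
    rw [MonoidHom.mem_ker, extAffineCharacter_apply, mul_comm, hπ]
    exact h w hm

theorem mem_freeOrbits_iff (q : Quotient (extAffSetoid Λ W P hP)) :
    q ∈ freeOrbits Λ W P hP ε sgn ↔
      extAffOrbitEquiv hP q ∈ regularOrbits Λ (extAffineCharacter hP ε hε hεW sgn) := by
  simp only [freeOrbits, regularOrbits, Set.mem_ofPred_eq,
    stabilizer_le_ker_extAffineCharacter_iff]
  exact forall_congr' fun x => imp_congr_left (extAffOrbitEquiv hP).apply_eq_iff_eq.symm

def freeOrbitsEquivRegularOrbits :
    freeOrbits Λ W P hP ε sgn ≃ regularOrbits Λ (extAffineCharacter hP ε hε hεW sgn) :=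
  (extAffOrbitEquiv hP).subtypeEquiv (mem_freeOrbits_iff hP ε hε hεW sgn)

end ExtendedAffineWeylGroup

theorem equivariantFunctions_free_of_rank_card_freeOrbits
    (P : AddSubgroup Λ) [P.FiniteIndex]
    (hP : ∀ (w : W) (v : Λ), v ∈ P → w • v ∈ P)
    (ε : P → ℤˣ) (hε : ∀ a b : P, ε (a + b) = ε a * ε b)
    (hεW : ∀ (w : W) (π : P), ε ⟨w • (π : Λ), hP w π π.2⟩ = ε π)
    (sgn : W →* ℤˣ) :
    Finite (freeOrbits Λ W P hP ε sgn) ∧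
    Nonempty ((equivariantFunctions Λ W P ε sgn) ≃ₗ[ℤ]
      ((freeOrbits Λ W P hP ε sgn) → ℤ)) :=
  ⟨Subtype.finite, ⟨(LinearEquiv.ofEq _ _
    (equivariantFunctions_eq_twistedInvariants hP ε hε hεW sgn)).trans <|
    (MulAction.twistedInvariantsEquiv Λ _).trans <|
    LinearEquiv.funCongrLeft ℤ ℤ (freeOrbitsEquivRegularOrbits hP ε hε hεW sgn)⟩⟩
end
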